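/- arXiv:2303.10270 — 2 statements merged into one kernel-verified Lean document; each statement's English description precedes it below -/
import Mathlib

section
/- Let ξ₄ : [0,∞) → ℝ³ be continuously differentiable, let k₄ > 0, and define the filtered error η₂(t) = ξ₄'(t) + k₄·ξ₄(t). Let Γ₂d : [0,∞) → ℝ³ be continuously differentiable with ‖Γ₂d(t)‖ ≤ κ₁ and ‖Γ₂d'(t)‖ ≤ κ₂ for all t ≥ 0. If the constant gain λ₂ satisfies λ₂ ≥ κ₁ + κ₂/k₄, then for every t ≥ 0 the auxiliary function R₂(s) = ⟨η₂(s), Γ₂d(s) − λ₂·sgn(η₂(s))⟩ satisfies ∫₀ᵗ R₂(s) ds ≤ λ₂·‖ξ₄(0)‖₁ − ⟨ξ₄(0), Γ₂d(0)⟩. -/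
open scoped RealInnerProductSpace

/-- The scalar signum function: `sgn σ = 1` for `σ > 0`, `0` at `0`, `-1` for `σ < 0`. -/
noncomputable def sgn (σ : ℝ) : ℝ := if 0 < σ then 1 else if σ < 0 then -1 else 0

/-- Componentwise signum of a vector in ℝ³. -/
noncomputable def vsgn (v : EuclideanSpace ℝ (Fin 3)) : EuclideanSpace ℝ (Fin 3) :=
  WithLp.toLp 2 (fun i => sgn (v i))

/-!
Write `η = ξ' + k ξ`. Integrating by parts, `∫ ⟪η, Γ⟫ = [⟪ξ, Γ⟫]₀ᵗ + ∫ (k ⟪ξ, Γ⟫ - ⟪ξ, Γ'⟫)`, and the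
last integrand is at most `(k κ₁ + κ₂) ‖ξ‖ ≤ k λ ‖ξ‖₁`. Since `⟪η, sgn η⟫ = ‖η‖₁`, it remains to
bound `λ ∫ ‖η‖₁` from below, which is done coordinatewise: `|ξᵢ(t)| - |ξᵢ(0)| + k ∫ |ξᵢ| ≤ ∫ |ηᵢ|`,
a comparison argument for `e^{ks} ξᵢ(s)`, whose derivative is `e^{ks} ηᵢ(s)`. The integrals of
`‖ξ‖₁` then cancel, and the boundary term `⟪ξ(t), Γ(t)⟫ - λ ‖ξ(t)‖₁` is nonpositive as `κ₁ ≤ λ`.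
-/

open Set

lemma mul_sgn_self (x : ℝ) : x * sgn x = |x| := by
  unfold sgn
  rcases lt_trichotomy x 0 with h | rfl | h
  · simp [h, h.not_gt, abs_of_neg h]
  · simp
  · simp [h, abs_of_pos h]

lemma inner_vsgn_self (v : EuclideanSpace ℝ (Fin 3)) : ⟪v, vsgn v⟫ = ∑ i, |v i| := by
  simp [PiLp.inner_apply, vsgn, mul_comm (sgn _), mul_sgn_self]

lemma EuclideanSpace.norm_le_sum_abs {ι : Type*} [Fintype ι] (v : EuclideanSpace ℝ ι) :
    ‖v‖ ≤ ∑ i, |v i| := by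
  rw [EuclideanSpace.norm_eq, Real.sqrt_le_left (by positivity)]
  simpa using Finset.sum_sq_le_sq_sum_of_nonneg (s := Finset.univ) fun i _ => abs_nonneg (v i)

lemma mul_inner_sub_inner_le {E : Type*} [NormedAddCommGroup E] [InnerProductSpace ℝ E]
    (v w w' : E) {k κ₁ κ₂ : ℝ} (hk : 0 ≤ k) (hw : ‖w‖ ≤ κ₁) (hw' : ‖w'‖ ≤ κ₂) :
    k * ⟪v, w⟫ - ⟪v, w'⟫ ≤ (k * κ₁ + κ₂) * ‖v‖ := by
  have h₁ : ⟪v, w⟫ ≤ ‖v‖ * κ₁ :=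
    (real_inner_le_norm v w).trans (mul_le_mul_of_nonneg_left hw (norm_nonneg v))
  have h₂ : -⟪v, w'⟫ ≤ ‖v‖ * κ₂ :=
    (neg_le_abs _).trans ((abs_real_inner_le_norm v w').trans
      (mul_le_mul_of_nonneg_left hw' (norm_nonneg v)))
  nlinarith [mul_le_mul_of_nonneg_left h₁ hk]

theorem integral_deriv_inner_eq_sub_integral_inner_deriv {E : Type*} [NormedAddCommGroup E]
    [InnerProductSpace ℝ E] {f f' g g' : ℝ → E} {a b : ℝ} (hf : ∀ s, HasDerivAt f (f' s) s)
    (hg : ∀ s, HasDerivAt g (g' s) s) (hf' : Continuous f') (hg' : Continuous g') :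
    ∫ s in a..b, ⟪f' s, g s⟫ = ⟪f b, g b⟫ - ⟪f a, g a⟫ - ∫ s in a..b, ⟪f s, g' s⟫ := by
  have hfc : Continuous f := continuous_iff_continuousAt.2 fun s => (hf s).continuousAt
  have hgc : Continuous g := continuous_iff_continuousAt.2 fun s => (hg s).continuousAt
  have hint : IntervalIntegrable (fun s => ⟪f s, g' s⟫) MeasureTheory.volume a b :=
    (hfc.inner hg').intervalIntegrable a b
  have hint' : IntervalIntegrable (fun s => ⟪f' s, g s⟫) MeasureTheory.volume a b :=
    (hf'.inner hgc).intervalIntegrable a b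
  rw [← intervalIntegral.integral_eq_sub_of_hasDerivAt (fun s _ => (hf s).inner ℝ (hg s))
    (hint.add hint'), intervalIntegral.integral_add hint hint']
  ring

theorem integral_inner_deriv_add_smul_eq {E : Type*} [NormedAddCommGroup E]
    [InnerProductSpace ℝ E] {f f' g g' : ℝ → E} (k : ℝ) {a b : ℝ}
    (hf : ∀ s, HasDerivAt f (f' s) s) (hg : ∀ s, HasDerivAt g (g' s) s)
    (hf' : Continuous f') (hg' : Continuous g') :
    ∫ s in a..b, ⟪f' s + k • f s, g s⟫ =
      ⟪f b, g b⟫ - ⟪f a, g a⟫ + ∫ s in a..b, (k * ⟪f s, g s⟫ - ⟪f s, g' s⟫) := by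
  have hfc : Continuous f := continuous_iff_continuousAt.2 fun s => (hf s).continuousAt
  have hgc : Continuous g := continuous_iff_continuousAt.2 fun s => (hg s).continuousAt
  have hfg : IntervalIntegrable (fun s => k * ⟪f s, g s⟫) MeasureTheory.volume a b :=
    ((hfc.inner hgc).intervalIntegrable a b).const_mul k
  simp_rw [inner_add_left, real_inner_smul_left]
  rw [intervalIntegral.integral_add ((hf'.inner hgc).intervalIntegrable a b) hfg,
    integral_deriv_inner_eq_sub_integral_inner_deriv hf hg hf' hg',
    intervalIntegral.integral_sub hfg ((hfc.inner hg').intervalIntegrable a b)]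
  ring

theorem norm_sub_norm_add_mul_integral_norm_le {E : Type*} [NormedAddCommGroup E]
    [NormedSpace ℝ E] {f f' : ℝ → E} (k : ℝ) {a b : ℝ} (hf : ∀ s, HasDerivAt f (f' s) s)
    (hf' : Continuous f') (hab : a ≤ b) :
    ‖f b‖ - ‖f a‖ + k * ∫ s in a..b, ‖f s‖ ≤ ∫ s in a..b, ‖f' s + k • f s‖ := by
  have hfc : Continuous f := continuous_iff_continuousAt.2 fun s => (hf s).continuousAt
  set C : ℝ → ℝ := fun x => ‖f a‖ - k * (∫ s in a..x, ‖f s‖) + ∫ s in a..x, ‖f' s + k • f s‖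
  have hC : ∀ x, HasDerivAt C (-(k * ‖f x‖) + ‖f' x + k • f x‖) x := fun x =>
    (((hfc.norm.integral_hasStrictDerivAt a x).hasDerivAt.const_mul k).const_sub _).add
      ((hf'.add (hfc.const_smul k)).norm.integral_hasStrictDerivAt a x).hasDerivAt
  have hexp : ∀ x, HasDerivAt (fun x => Real.exp (k * x)) (Real.exp (k * x) * k) x := fun x =>
    by simpa using ((hasDerivAt_id x).const_mul k).exp
  have hg : ∀ x, HasDerivAt (fun x => Real.exp (k * x) • f x)
      (Real.exp (k * x) • (f' x + k • f x)) x := by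
    intro x
    refine ((hexp x).smul (hf x)).congr_deriv ?_
    rw [smul_add, smul_smul, add_comm]
  -- `e^{kx} f x` stays below `e^{kx} (C x + ε (1 + x - a))`: at a contact point the derivative
  -- of the barrier exceeds `‖(e^{kx} f)'‖` by exactly `ε e^{kx}`.
  have hbarrier : ∀ ε > 0, ‖f b‖ ≤ C b + ε * (1 + b - a) := by
    intro ε hε
    set Cε : ℝ → ℝ := fun x => C x + ε * (1 + x - a)
    have hB : ∀ x, HasDerivAt (fun x => Real.exp (k * x) * Cε x)
        (Real.exp (k * x) * (k * Cε x + (-(k * ‖f x‖) + ‖f' x + k • f x‖) + ε)) x := by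
      intro x
      have hCε : HasDerivAt Cε (-(k * ‖f x‖) + ‖f' x + k • f x‖ + ε) x :=
        ((hC x).add ((((hasDerivAt_id x).const_add 1).sub_const a).const_mul ε)).congr_deriv
          (by ring)
      exact ((hexp x).mul hCε).congr_deriv (by ring)
    have key := image_norm_le_of_norm_deriv_right_lt_deriv_boundary (a := a) (b := b)
      (continuous_iff_continuousAt.2 fun x => (hg x).continuousAt).continuousOn
      (fun x _ => (hg x).hasDerivWithinAt) ?_ hB ?_ ⟨hab, le_rfl⟩
    · simp only [norm_smul, Real.norm_eq_abs, abs_of_pos (Real.exp_pos _)] at key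
      exact le_of_mul_le_mul_left key (Real.exp_pos _)
    · simp only [norm_smul, Real.norm_eq_abs, abs_of_pos (Real.exp_pos _), Cε, C,
        intervalIntegral.integral_same, mul_zero, sub_zero, add_zero, add_sub_cancel_right, mul_one]
      gcongr
      exact le_add_of_nonneg_right hε.le
    · intro x _ hx
      simp only [norm_smul, Real.norm_eq_abs, abs_of_pos (Real.exp_pos _)] at hx ⊢
      rw [← mul_left_cancel₀ (Real.exp_pos _).ne' hx]
      nlinarith [Real.exp_pos (k * x)]
  have := le_of_forall_pos_le_add fun δ hδ => by
    simpa [div_mul_cancel₀ δ (by linarith : (1 + b - a) ≠ 0)] using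
      hbarrier (δ / (1 + b - a)) (div_pos hδ (by linarith))
  simp only [C] at this
  linarith

theorem sum_abs_sub_sum_abs_add_mul_integral_le {ι : Type*} [Fintype ι]
    {f f' : ℝ → EuclideanSpace ℝ ι} (k : ℝ) {a b : ℝ} (hf : ∀ s, HasDerivAt f (f' s) s)
    (hf' : Continuous f') (hab : a ≤ b) :
    ∑ i, |f b i| - ∑ i, |f a i| + k * ∫ s in a..b, ∑ i, |f s i| ≤
      ∫ s in a..b, ∑ i, |(f' s + k • f s) i| := by
  have hfc : Continuous f := continuous_iff_continuousAt.2 fun s => (hf s).continuousAt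
  have hcoord : ∀ i, Continuous fun v : EuclideanSpace ℝ ι => v i := fun i =>
    (EuclideanSpace.proj (𝕜 := ℝ) i).continuous
  have hf_i : ∀ i, Continuous fun s => |f s i| := fun i => ((hcoord i).comp hfc).abs
  have hη_i : ∀ i, Continuous fun s => |(f' s + k • f s) i| := fun i =>
    ((hcoord i).comp (hf'.add (hfc.const_smul k))).abs
  rw [intervalIntegral.integral_finsetSum fun i _ => (hf_i i).intervalIntegrable _ _,
    intervalIntegral.integral_finsetSum fun i _ => (hη_i i).intervalIntegrable _ _,
    Finset.mul_sum, ← Finset.sum_sub_distrib, ← Finset.sum_add_distrib]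
  refine Finset.sum_le_sum fun i _ => ?_
  simpa using norm_sub_norm_add_mul_integral_norm_le k (f := fun s => f s i)
    (fun s => (EuclideanSpace.proj (𝕜 := ℝ) i).hasFDerivAt.comp_hasDerivAt s (hf s))
    ((hcoord i).comp hf') hab

theorem integral_inner_sub_mul_sum_abs_le {ι : Type*} [Fintype ι]
    {ξ ξ' Γ Γ' : ℝ → EuclideanSpace ℝ ι} {k κ₁ κ₂ lam a b : ℝ}
    (hξ : ∀ s, HasDerivAt ξ (ξ' s) s) (hξ' : Continuous ξ')
    (hΓ : ∀ s, HasDerivAt Γ (Γ' s) s) (hΓ' : Continuous Γ') (hk : 0 < k)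
    (hΓ_bnd : ∀ s ∈ Icc a b, ‖Γ s‖ ≤ κ₁) (hΓ'_bnd : ∀ s ∈ Icc a b, ‖Γ' s‖ ≤ κ₂)
    (hlam : κ₁ + κ₂ / k ≤ lam) (hab : a ≤ b) :
    ∫ s in a..b, (⟪ξ' s + k • ξ s, Γ s⟫ - lam * ∑ i, |(ξ' s + k • ξ s) i|) ≤
      lam * ∑ i, |ξ a i| - ⟪ξ a, Γ a⟫ := by
  have hξc : Continuous ξ := continuous_iff_continuousAt.2 fun s => (hξ s).continuousAt
  have hΓc : Continuous Γ := continuous_iff_continuousAt.2 fun s => (hΓ s).continuousAt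
  have hηc : Continuous fun s => ξ' s + k • ξ s := hξ'.add (hξc.const_smul k)
  have hκ₂ : 0 ≤ κ₂ := (norm_nonneg _).trans (hΓ'_bnd a ⟨le_rfl, hab⟩)
  have hκ₁ : κ₁ ≤ lam := by linarith [div_nonneg hκ₂ hk.le]
  have hlam₀ : 0 ≤ lam := ((norm_nonneg _).trans (hΓ_bnd a ⟨le_rfl, hab⟩)).trans hκ₁
  have hkκ : k * κ₁ + κ₂ ≤ k * lam := by
    have := mul_le_mul_of_nonneg_left hlam hk.le
    rwa [mul_add, mul_div_cancel₀ _ hk.ne'] at this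
  have hsum_abs : ∀ {f : ℝ → EuclideanSpace ℝ ι}, Continuous f →
      Continuous fun s => ∑ i, |f s i| := fun hf =>
    continuous_finsetSum _ fun i _ => ((EuclideanSpace.proj (𝕜 := ℝ) i).continuous.comp hf).abs
  have hrem : ∫ s in a..b, (k * ⟪ξ s, Γ s⟫ - ⟪ξ s, Γ' s⟫) ≤
      k * lam * ∫ s in a..b, ∑ i, |ξ s i| := by
    rw [← intervalIntegral.integral_const_mul]
    refine intervalIntegral.integral_mono_on hab
      (((continuous_const.mul (hξc.inner hΓc)).sub (hξc.inner hΓ')).intervalIntegrable a b)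
      ((continuous_const.mul (hsum_abs hξc)).intervalIntegrable a b) fun s hs => ?_
    calc k * ⟪ξ s, Γ s⟫ - ⟪ξ s, Γ' s⟫ ≤ (k * κ₁ + κ₂) * ‖ξ s‖ :=
          mul_inner_sub_inner_le _ _ _ hk.le (hΓ_bnd s hs) (hΓ'_bnd s hs)
      _ ≤ k * lam * ∑ i, |ξ s i| :=
          mul_le_mul hkκ (EuclideanSpace.norm_le_sum_abs _) (norm_nonneg _)
            (mul_nonneg hk.le hlam₀)
  have hend : ⟪ξ b, Γ b⟫ ≤ lam * ∑ i, |ξ b i| :=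
    calc ⟪ξ b, Γ b⟫ ≤ ‖ξ b‖ * ‖Γ b‖ := real_inner_le_norm _ _
      _ ≤ (∑ i, |ξ b i|) * lam :=
          mul_le_mul (EuclideanSpace.norm_le_sum_abs _)
            ((hΓ_bnd b ⟨hab, le_rfl⟩).trans hκ₁) (norm_nonneg _) (by positivity)
      _ = lam * ∑ i, |ξ b i| := mul_comm _ _
  have hl1 := mul_le_mul_of_nonneg_left
    (sum_abs_sub_sum_abs_add_mul_integral_le k hξ hξ' hab) hlam₀
  rw [intervalIntegral.integral_sub ((hηc.inner hΓc).intervalIntegrable a b)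
    (((hsum_abs hηc).intervalIntegrable a b).const_mul lam),
    intervalIntegral.integral_const_mul, integral_inner_deriv_add_smul_eq k hξ hΓ hξ' hΓ']
  linarith

/-- RISE integral inequality for the rotational loop (Lemma 1, (R2ineq)):
if `lam₂ ≥ κ₁ + κ₂ / k₄`, then for all `t ≥ 0`,
`∫₀ᵗ ⟨η₂(s), Γ₂d(s) − lam₂ sgn(η₂(s))⟩ ds ≤ lam₂ ‖ξ₄(0)‖₁ − ⟨ξ₄(0), Γ₂d(0)⟩`. -/
theorem rise_integral_inequality_rotational
    (ξ₄ Γ₂d : ℝ → EuclideanSpace ℝ (Fin 3)) (k₄ κ₁ κ₂ lam₂ : ℝ)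
    (hk₄ : 0 < k₄)
    (hξ₄ : ContDiff ℝ 1 ξ₄)
    (hΓ : ContDiff ℝ 1 Γ₂d)
    (hΓ_bnd : ∀ t : ℝ, 0 ≤ t → ‖Γ₂d t‖ ≤ κ₁)
    (hΓ'_bnd : ∀ t : ℝ, 0 ≤ t → ‖deriv Γ₂d t‖ ≤ κ₂)
    (hlam₂ : κ₁ + κ₂ / k₄ ≤ lam₂)
    (η₂ : ℝ → EuclideanSpace ℝ (Fin 3))
    (hη₂ : ∀ t : ℝ, η₂ t = deriv ξ₄ t + k₄ • ξ₄ t)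
    (R₂ : ℝ → ℝ)
    (hR₂ : ∀ s : ℝ, R₂ s = ⟪η₂ s, Γ₂d s - lam₂ • vsgn (η₂ s)⟫) :
    ∀ t : ℝ, 0 ≤ t →
      ∫ s in (0:ℝ)..t, R₂ s ≤ lam₂ * (∑ i, |ξ₄ 0 i|) - ⟪ξ₄ 0, Γ₂d 0⟫ := by
  intro t ht
  have hR : R₂ = fun s =>
      ⟪deriv ξ₄ s + k₄ • ξ₄ s, Γ₂d s⟫ - lam₂ * ∑ i, |(deriv ξ₄ s + k₄ • ξ₄ s) i| := by
    ext s
    rw [hR₂, hη₂, inner_sub_right, real_inner_smul_right, inner_vsgn_self]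
  rw [hR]
  exact integral_inner_sub_mul_sum_abs_le
    (fun s => ((hξ₄.differentiable one_ne_zero) s).hasDerivAt) (hξ₄.continuous_deriv le_rfl)
    (fun s => ((hΓ.differentiable one_ne_zero) s).hasDerivAt) (hΓ.continuous_deriv le_rfl) hk₄
    (fun s hs => hΓ_bnd s hs.1) (fun s hs => hΓ'_bnd s hs.1) hlam₂ ht
end

section
/- Let ξ₁, ξ₂, ξ₃, ξ₄, η₁, η₂ ∈ ℝ³, let k₁, k₂, k₃, k₄ > 1/2, α₁, α₂ > 0, and ρ₁, ρ₂ ≥ 0 with ρ = max{ρ₁, ρ₂}. Define ‖μ₁‖ = √(‖ξ₁‖² + ‖ξ₂‖² + ‖η₁‖²), ‖μ₂‖ = √(‖ξ₃‖² + ‖ξ₄‖² + ‖η₂‖²), ‖μ‖² = ‖μ₁‖² + ‖μ₂‖², c₁ = min{k₁ − 1/2, k₂ − 1/2, k₃ − 1/2, k₄ − 1/2, 1}, and c₂ = min{α₁, α₂}. Then ⟨ξ₁, ξ₂⟩ + ⟨ξ₃, ξ₄⟩ − k₁‖ξ₁‖² − k₂‖ξ₂‖² − k₃‖ξ₃‖²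 − k₄‖ξ₄‖² + ρ₁‖μ₁‖‖η₁‖ − (α₁+1)‖η₁‖² + ρ₂‖μ₂‖‖η₂‖ − (α₂+1)‖η₂‖² ≤ −(c₁ − ρ²/(4c₂))·‖μ‖². -/
open scoped RealInnerProductSpace

lemma key_damping (ρi ρv c₂ αi m e : ℝ) (hρi : 0 ≤ ρi) (hρle : ρi ≤ ρv)
    (hc₂ : 0 < c₂) (hcα : c₂ ≤ αi) (hm : 0 ≤ m) (he : 0 ≤ e) :
    ρi * m * e ≤ αi * e ^ 2 + ρv ^ 2 / (4 * c₂) * m ^ 2 := by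
  have h1 : ρi * m * e ≤ ρv * m * e := by
    have := mul_le_mul_of_nonneg_right (mul_le_mul_of_nonneg_right hρle hm) he
    linarith
  have h2 : 4 * c₂ * (ρv * m * e) ≤ 4 * c₂ * (αi * e ^ 2) + ρv ^ 2 * m ^ 2 := by
    nlinarith [sq_nonneg (ρv * m - 2 * c₂ * e), mul_le_mul_of_nonneg_right hcα (sq_nonneg e)]
  have h3 : ρv ^ 2 / (4 * c₂) * (4 * c₂) = ρv ^ 2 := div_mul_cancel₀ _ (by positivity)
  nlinarith [h2, h3]

lemma real_two_loop (x₁ x₂ x₃ x₄ y₁ y₂ p₁ p₂ m₁ m₂ k₁ k₂ k₃ k₄ α₁ α₂ ρ₁ ρ₂ ρ c₁ c₂ d : ℝ)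
    (hx₁ : 0 ≤ x₁) (hx₂ : 0 ≤ x₂) (hx₃ : 0 ≤ x₃) (hx₄ : 0 ≤ x₄)
    (hy₁ : 0 ≤ y₁) (hy₂ : 0 ≤ y₂)
    (hp₁ : p₁ ≤ x₁ * x₂) (hp₂ : p₂ ≤ x₃ * x₄)
    (hm₁ : m₁ ^ 2 = x₁ ^ 2 + x₂ ^ 2 + y₁ ^ 2) (hm₂ : m₂ ^ 2 = x₃ ^ 2 + x₄ ^ 2 + y₂ ^ 2)
    (hk₁ : c₁ ≤ k₁ - 1 / 2) (hk₂ : c₁ ≤ k₂ - 1 / 2) (hk₃ : c₁ ≤ k₃ - 1 / 2)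
    (hk₄ : c₁ ≤ k₄ - 1 / 2) (hc₁ : c₁ ≤ 1)
    (hkey₁ : ρ₁ * m₁ * y₁ ≤ α₁ * y₁ ^ 2 + d * m₁ ^ 2)
    (hkey₂ : ρ₂ * m₂ * y₂ ≤ α₂ * y₂ ^ 2 + d * m₂ ^ 2) :
    p₁ + p₂ - k₁ * x₁ ^ 2 - k₂ * x₂ ^ 2 - k₃ * x₃ ^ 2 - k₄ * x₄ ^ 2
      + ρ₁ * m₁ * y₁ - (α₁ + 1) * y₁ ^ 2 + ρ₂ * m₂ * y₂ - (α₂ + 1) * y₂ ^ 2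
      ≤ -(c₁ - d) * (m₁ ^ 2 + m₂ ^ 2) := by
  nlinarith [sq_nonneg (x₁ - x₂), sq_nonneg (x₃ - x₄),
    mul_le_mul_of_nonneg_right hk₁ (sq_nonneg x₁),
    mul_le_mul_of_nonneg_right hk₂ (sq_nonneg x₂),
    mul_le_mul_of_nonneg_right hk₃ (sq_nonneg x₃),
    mul_le_mul_of_nonneg_right hk₄ (sq_nonneg x₄),
    mul_le_mul_of_nonneg_right hc₁ (sq_nonneg y₁),
    mul_le_mul_of_nonneg_right hc₁ (sq_nonneg y₂)]

/-- Combined two-loop Lyapunov derivative bound (eq. (65)) in the proof of Theorem 1. -/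
theorem two_loop_lyapunov_bound
    (ξ₁ ξ₂ ξ₃ ξ₄ η₁ η₂ : EuclideanSpace ℝ (Fin 3))
    (k₁ k₂ k₃ k₄ α₁ α₂ ρ₁ ρ₂ ρ : ℝ)
    (hk₁ : 1 / 2 < k₁) (hk₂ : 1 / 2 < k₂) (hk₃ : 1 / 2 < k₃) (hk₄ : 1 / 2 < k₄)
    (hα₁ : 0 < α₁) (hα₂ : 0 < α₂) (hρ₁ : 0 ≤ ρ₁) (hρ₂ : 0 ≤ ρ₂)
    (hρ : ρ = max ρ₁ ρ₂)
    (μ₁norm μ₂norm μnormsq c₁ c₂ : ℝ)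
    (hμ₁ : μ₁norm = Real.sqrt (‖ξ₁‖ ^ 2 + ‖ξ₂‖ ^ 2 + ‖η₁‖ ^ 2))
    (hμ₂ : μ₂norm = Real.sqrt (‖ξ₃‖ ^ 2 + ‖ξ₄‖ ^ 2 + ‖η₂‖ ^ 2))
    (hμ : μnormsq = μ₁norm ^ 2 + μ₂norm ^ 2)
    (hc₁ : c₁ = min (min (min (min (k₁ - 1 / 2) (k₂ - 1 / 2)) (k₃ - 1 / 2)) (k₄ - 1 / 2)) 1)
    (hc₂ : c₂ = min α₁ α₂) :
    ⟪ξ₁, ξ₂⟫ + ⟪ξ₃, ξ₄⟫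
      - k₁ * ‖ξ₁‖ ^ 2 - k₂ * ‖ξ₂‖ ^ 2 - k₃ * ‖ξ₃‖ ^ 2 - k₄ * ‖ξ₄‖ ^ 2
      + ρ₁ * μ₁norm * ‖η₁‖ - (α₁ + 1) * ‖η₁‖ ^ 2
      + ρ₂ * μ₂norm * ‖η₂‖ - (α₂ + 1) * ‖η₂‖ ^ 2
      ≤ -(c₁ - ρ ^ 2 / (4 * c₂)) * μnormsq := by
  have hc₂pos : 0 < c₂ := by rw [hc₂]; exact lt_min hα₁ hα₂
  have hc₂α₁ : c₂ ≤ α₁ := hc₂ ▸ min_le_left _ _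
  have hc₂α₂ : c₂ ≤ α₂ := hc₂ ▸ min_le_right _ _
  have hρr₁ : ρ₁ ≤ ρ := hρ ▸ le_max_left _ _
  have hρr₂ : ρ₂ ≤ ρ := hρ ▸ le_max_right _ _
  have hm₁0 : 0 ≤ μ₁norm := hμ₁ ▸ Real.sqrt_nonneg _
  have hm₂0 : 0 ≤ μ₂norm := hμ₂ ▸ Real.sqrt_nonneg _
  have hm₁sq : μ₁norm ^ 2 = ‖ξ₁‖ ^ 2 + ‖ξ₂‖ ^ 2 + ‖η₁‖ ^ 2 := by
    rw [hμ₁, Real.sq_sqrt (by positivity)]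
  have hm₂sq : μ₂norm ^ 2 = ‖ξ₃‖ ^ 2 + ‖ξ₄‖ ^ 2 + ‖η₂‖ ^ 2 := by
    rw [hμ₂, Real.sq_sqrt (by positivity)]
  have hinner₁ : ⟪ξ₁, ξ₂⟫ ≤ ‖ξ₁‖ * ‖ξ₂‖ := real_inner_le_norm _ _
  have hinner₂ : ⟪ξ₃, ξ₄⟫ ≤ ‖ξ₃‖ * ‖ξ₄‖ := real_inner_le_norm _ _
  have hc₁1 : c₁ ≤ 1 := hc₁ ▸ min_le_right _ _
  have hc₁k₁ : c₁ ≤ k₁ - 1 / 2 := by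
    rw [hc₁]; exact le_trans (min_le_left _ _) (le_trans (min_le_left _ _)
      (le_trans (min_le_left _ _) (min_le_left _ _)))
  have hc₁k₂ : c₁ ≤ k₂ - 1 / 2 := by
    rw [hc₁]; exact le_trans (min_le_left _ _) (le_trans (min_le_left _ _)
      (le_trans (min_le_left _ _) (min_le_right _ _)))
  have hc₁k₃ : c₁ ≤ k₃ - 1 / 2 := by
    rw [hc₁]; exact le_trans (min_le_left _ _) (le_trans (min_le_left _ _)
      (min_le_right _ _))
  have hc₁k₄ : c₁ ≤ k₄ - 1 / 2 := by
    rw [hc₁]; exact le_trans (min_le_left _ _) (min_le_right _ _)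
  have hkey₁ := key_damping ρ₁ ρ c₂ α₁ μ₁norm ‖η₁‖ hρ₁ hρr₁ hc₂pos hc₂α₁ hm₁0 (norm_nonneg _)
  have hkey₂ := key_damping ρ₂ ρ c₂ α₂ μ₂norm ‖η₂‖ hρ₂ hρr₂ hc₂pos hc₂α₂ hm₂0 (norm_nonneg _)
  rw [hμ]
  exact real_two_loop ‖ξ₁‖ ‖ξ₂‖ ‖ξ₃‖ ‖ξ₄‖ ‖η₁‖ ‖η₂‖ _ _ μ₁norm μ₂norm k₁ k₂ k₃ k₄ α₁ α₂
    ρ₁ ρ₂ ρ c₁ c₂ _ (norm_nonneg _) (norm_nonneg _) (norm_nonneg _) (norm_nonneg _)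
    (norm_nonneg _) (norm_nonneg _) hinner₁ hinner₂ hm₁sq hm₂sq
    hc₁k₁ hc₁k₂ hc₁k₃ hc₁k₄ hc₁1 hkey₁ hkey₂
end
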